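/- For integers j ∈ {0,1,2} and α ∈ ℕ with α ≥ 1, and any ε > 0 small, there is a constant C such that for all t ≥ 0, Σ_{p∈ℤ, p≠0} Σ_{q∈ℕ} (1/(p²+(qπ/2)²)^j) · (p²/(p²+(qπ/2)²))^j · (1/(p^{4α}(1+((π q)/(2|p|))²)^{2α})) · exp(-2t·p²/(p²+(qπ/2)²)) ≤ C/(1+t)^{j+2α-1/2-ε}. -/

import Mathlib

open Real

lemma expbound (b : ℝ) (hb : 1 ≤ b) (A t : ℝ) (hA : 0 < A) (hA1 : A ≤ 1) (ht : 0 ≤ t) :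
    A ^ b * Real.exp (-(2 * t * A)) ≤ b ^ b / (1 + t) ^ b := by
  have hb0 : (0:ℝ) < b := lt_of_lt_of_le one_pos hb
  have h1t : (0:ℝ) < 1 + t := by linarith
  rw [le_div_iff₀ (by positivity)]
  have e1 : A ^ b * Real.exp (-(2 * t * A)) * (1 + t) ^ b
      = (A * (1 + t)) ^ b * Real.exp (-(2 * t * A)) := by
    rw [Real.mul_rpow hA.le h1t.le]; ring
  rw [e1]
  have h2 : A * (1 + t) ≤ 1 + t * A := by nlinarith
  have h3 : (A * (1 + t)) ^ b ≤ (1 + t * A) ^ b :=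
    Real.rpow_le_rpow (by positivity) h2 hb0.le
  have htA : 0 ≤ t * A := by positivity
  have h4 : 1 + t * A ≤ b * Real.exp (t * A / b) := by
    have := Real.add_one_le_exp (t * A / b)
    have hbne : b ≠ 0 := ne_of_gt hb0
    have h := mul_le_mul_of_nonneg_left this hb0.le
    have hc : b * (t * A / b) = t * A := mul_div_cancel₀ _ hbne
    nlinarith [h, hc]
  have h5 : (1 + t * A) ^ b ≤ (b * Real.exp (t * A / b)) ^ b :=
    Real.rpow_le_rpow (by linarith) h4 hb0.le
  have h6 : (b * Real.exp (t * A / b)) ^ b = b ^ b * Real.exp (t * A) := by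
    rw [Real.mul_rpow hb0.le (Real.exp_pos _).le,
      Real.rpow_def_of_pos (Real.exp_pos _), Real.log_exp]
    congr 1
    field_simp
  calc (A * (1 + t)) ^ b * Real.exp (-(2 * t * A))
      ≤ (1 + t * A) ^ b * Real.exp (-(2 * t * A)) := by
        exact mul_le_mul_of_nonneg_right h3 (Real.exp_pos _).le
    _ ≤ b ^ b * Real.exp (t * A) * Real.exp (-(2 * t * A)) := by
        have := h5.trans_eq h6
        exact mul_le_mul_of_nonneg_right this (Real.exp_pos _).le
    _ = b ^ b * Real.exp (-(t * A)) := by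
        rw [mul_assoc, ← Real.exp_add]; ring_nf
    _ ≤ b ^ b * 1 := by
        apply mul_le_mul_of_nonneg_left _ (Real.rpow_nonneg hb0.le _)
        exact Real.exp_le_one_iff.mpr (by linarith)
    _ = b ^ b := mul_one _

lemma alg2 (c y : ℝ) (hy : y ≠ 0) : y^2 * (1 + (c/(2*|y|))^2) = y^2 + (c/2)^2 := by
  have h : |y|^2 = y^2 := sq_abs y
  have h0 : |y| ≠ 0 := abs_ne_zero.mpr hy
  field_simp
  nlinarith [sq_abs y]

lemma alg (P D : ℝ) (hP : P ≠ 0) (hD : D ≠ 0) (j a : ℕ) :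
    1/D^j * (P/D)^j * (1/D^(2*a)) = (P/D)^(2*j+2*a) / P^(j+2*a) := by
  rw [div_pow, div_pow]
  field_simp
  ring

set_option maxHeartbeats 1000000 in
lemma termbound (j α : ℕ) (hα : 1 ≤ α) (ε' : ℝ) (hε0 : 0 < ε') (hε1 : ε' ≤ 1/4)
    (t : ℝ) (ht : 0 ≤ t) (p : ℤ) (hp : p ≠ 0) (q : ℕ) (hq : 1 ≤ q) :
    (1 / ((p : ℝ) ^ 2 + ((q : ℝ) * (Real.pi / 2)) ^ 2) ^ j)
      * ((p : ℝ) ^ 2 / ((p : ℝ) ^ 2 + ((q : ℝ) * (Real.pi / 2)) ^ 2)) ^ j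
      * (1 / ((p : ℝ) ^ (4 * α) * (1 + ((Real.pi * q) / (2 * |(p : ℝ)|)) ^ 2) ^ (2 * α)))
      * Real.exp (-(2 * t * (p : ℝ) ^ 2 / ((p : ℝ) ^ 2 + ((q : ℝ) * (Real.pi / 2)) ^ 2)))
    ≤ (((j:ℝ) + 2*α - 1/2 - ε') ^ ((j:ℝ) + 2*α - 1/2 - ε') / (1 + t) ^ ((j:ℝ) + 2*α - 1/2 - ε'))
      * (1 / (p:ℝ)^2 * (1 / (q:ℝ) ^ (1 + 2*ε'))) := by
  set B : ℝ := (j:ℝ) + 2*α - 1/2 - ε' with hB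
  have hα1 : (1:ℝ) ≤ (α:ℝ) := by exact_mod_cast hα
  have hB1 : 1 ≤ B := by
    have : (0:ℝ) ≤ (j:ℝ) := Nat.cast_nonneg j
    simp only [hB]; linarith
  have hpR : (1:ℝ) ≤ |(p:ℝ)| := by
    rw [← Int.cast_abs]; exact_mod_cast Int.one_le_abs (by omega)
  have hp0 : (0:ℝ) < (p:ℝ)^2 := by
    have : (p:ℝ) ≠ 0 := Int.cast_ne_zero.mpr hp
    positivity
  have hq1 : (1:ℝ) ≤ (q:ℝ) := by exact_mod_cast hq
  have hq0 : (0:ℝ) < (q:ℝ) := by linarith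
  set P : ℝ := (p:ℝ)^2 with hP
  set X : ℝ := ((q:ℝ) * (Real.pi / 2))^2 with hX
  have hπ : (2:ℝ) ≤ Real.pi := two_le_pi
  have hX0 : 0 < X := by
    have : (0:ℝ) < Real.pi := pi_pos
    positivity
  have hXq : (q:ℝ)^2 ≤ X := by
    have hπ2 : (4:ℝ) ≤ Real.pi^2 := by nlinarith
    rw [hX]
    have hq2 : (0:ℝ) ≤ (q:ℝ)^2 := sq_nonneg _
    nlinarith
  set D : ℝ := P + X with hD
  have hD0 : 0 < D := by positivity
  set A : ℝ := P / D with hA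
  have hA0 : 0 < A := div_pos hp0 hD0
  have hA1 : A ≤ 1 := by
    rw [hA, div_le_one hD0]; linarith
  -- rewrite the third factor
  have habs : |(p:ℝ)|^2 = P := sq_abs _
  have hthird : (p : ℝ) ^ (4 * α) * (1 + ((Real.pi * q) / (2 * |(p : ℝ)|)) ^ 2) ^ (2 * α)
      = D ^ (2 * α) := by
    have h1 : (p:ℝ) ^ (4*α) = P ^ (2*α) := by
      rw [hP, ← pow_mul]; ring_nf
    have hpne : ((p:ℝ)) ≠ 0 := Int.cast_ne_zero.mpr hp
    have h2 : P * (1 + ((Real.pi * q) / (2 * |(p : ℝ)|)) ^ 2) = D := by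
      rw [hD, hX, hP, alg2 (Real.pi * (q:ℝ)) ((p:ℝ)) hpne]
      ring
    rw [h1, ← mul_pow, h2]
  rw [hthird]
  have e2 : 2 * t * P / D = 2 * t * A := by rw [hA, mul_div_assoc]
  rw [e2, hA, alg P D hp0.ne' hD0.ne', ← hA]
  set s : ℝ := 1 + 2*ε' with hs
  have hm : ((2*j+2*α : ℕ):ℝ) = B + (1/2 + ε') + (j:ℝ) := by
    push_cast; rw [hB]; ring
  have e3 : A^(2*j+2*α) = A^B * A^((1:ℝ)/2+ε') * A^((j:ℝ)) := by
    rw [← Real.rpow_natCast A (2*j+2*α), hm, Real.rpow_add hA0, Real.rpow_add hA0]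
  have hP1 : (1:ℝ) ≤ P := by nlinarith [hpR, habs, sq_nonneg (|(p:ℝ)| - 1)]
  have hqs0 : (0:ℝ) < (q:ℝ)^s := Real.rpow_pos_of_pos hq0 _
  have hD2 : (q:ℝ)^2 ≤ D := by rw [hD]; nlinarith
  have hApq : A ≤ (|(p:ℝ)|/(q:ℝ))^2 := by
    rw [hA, div_pow, habs, div_le_div_iff₀ hD0 (by positivity : (0:ℝ) < (q:ℝ)^2)]
    exact mul_le_mul_of_nonneg_left hD2 hp0.le
  have hAe : A^((1:ℝ)/2+ε') ≤ |(p:ℝ)|^s / (q:ℝ)^s := by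
    have h1 : A^((1:ℝ)/2+ε') ≤ ((|(p:ℝ)|/(q:ℝ))^2)^((1:ℝ)/2+ε') :=
      Real.rpow_le_rpow hA0.le hApq (by linarith)
    have h2 : ((|(p:ℝ)|/(q:ℝ))^2)^((1:ℝ)/2+ε') = (|(p:ℝ)|/(q:ℝ))^s := by
      rw [← Real.rpow_natCast (|(p:ℝ)|/(q:ℝ)) 2, ← Real.rpow_mul (by positivity), hs]
      congr 1
      push_cast
      ring
    have h3 : (|(p:ℝ)|/(q:ℝ))^s = |(p:ℝ)|^s / (q:ℝ)^s :=
      Real.div_rpow (abs_nonneg _) hq0.le _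
    rw [h2, h3] at h1; exact h1
  have hpe : |(p:ℝ)|^s ≤ P := by
    have h1 : |(p:ℝ)|^s ≤ |(p:ℝ)|^(2:ℝ) :=
      Real.rpow_le_rpow_of_exponent_le hpR (by rw [hs]; linarith)
    have h2 : |(p:ℝ)|^(2:ℝ) = P := by
      rw [show (2:ℝ) = ((2:ℕ):ℝ) by norm_num, Real.rpow_natCast, habs]
    exact h1.trans_eq h2
  have hAj : A^((j:ℝ)) ≤ 1 := Real.rpow_le_one hA0.le hA1 (Nat.cast_nonneg j)
  have hPP : P^2 ≤ P^(j+2*α) := pow_le_pow_right₀ hP1 (by omega)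
  have hBpos : (0:ℝ) ≤ B^B / (1+t)^B := by positivity
  calc A^(2*j+2*α) / P^(j+2*α) * Real.exp (-(2*t*A))
      = (A^B * Real.exp (-(2*t*A))) * (A^((1:ℝ)/2+ε') * A^((j:ℝ)) / P^(j+2*α)) := by
        rw [e3]; ring
    _ ≤ (B^B/(1+t)^B) * (A^((1:ℝ)/2+ε') * A^((j:ℝ)) / P^(j+2*α)) := by
        apply mul_le_mul_of_nonneg_right (expbound B hB1 A t hA0 hA1 ht)
        positivity
    _ ≤ (B^B/(1+t)^B) * (1 / P * (1 / (q:ℝ)^s)) := by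
        apply mul_le_mul_of_nonneg_left _ hBpos
        have num : A^((1:ℝ)/2+ε') * A^((j:ℝ)) ≤ P / (q:ℝ)^s := by
          calc A^((1:ℝ)/2+ε') * A^((j:ℝ))
              ≤ (|(p:ℝ)|^s / (q:ℝ)^s) * 1 :=
                mul_le_mul hAe hAj (Real.rpow_nonneg hA0.le _) (by positivity)
            _ = |(p:ℝ)|^s / (q:ℝ)^s := mul_one _
            _ ≤ P / (q:ℝ)^s := by
                exact (div_le_div_iff_of_pos_right hqs0).mpr hpe
        calc A^((1:ℝ)/2+ε') * A^((j:ℝ)) / P^(j+2*α)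
            ≤ (P / (q:ℝ)^s) / P^(j+2*α) := by
              exact (div_le_div_iff_of_pos_right (by positivity)).mpr num
          _ ≤ (P / (q:ℝ)^s) / P^2 := by
              exact (div_le_div_iff_of_pos_left (by positivity) (by positivity) (by positivity)).mpr hPP
          _ = 1 / P * (1 / (q:ℝ)^s) := by
              rw [div_div, pow_two, one_div_mul_one_div,
                div_eq_div_iff (by positivity) (by positivity)]
              ring


set_option maxHeartbeats 1000000 in
theorem stmt_13 (j : ℕ) (hj : j ≤ 2) (α : ℕ) (hα : 1 ≤ α) (ε : ℝ) (hε : 0 < ε) :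
    ∃ C : ℝ, ∀ t : ℝ, 0 ≤ t →
      (∑' p : ℤ, ∑' q : ℕ,
        if p ≠ 0 ∧ 1 ≤ q then
          (1 / ((p : ℝ) ^ 2 + ((q : ℝ) * (Real.pi / 2)) ^ 2) ^ j)
            * ((p : ℝ) ^ 2 / ((p : ℝ) ^ 2 + ((q : ℝ) * (Real.pi / 2)) ^ 2)) ^ j
            * (1 / ((p : ℝ) ^ (4 * α)
                * (1 + ((Real.pi * q) / (2 * |(p : ℝ)|)) ^ 2) ^ (2 * α)))
            * Real.exp (-(2 * t * (p : ℝ) ^ 2 / ((p : ℝ) ^ 2 + ((q : ℝ) * (Real.pi / 2)) ^ 2)))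
        else 0)
      ≤ C / (1 + t) ^ ((j : ℝ) + 2 * (α : ℝ) - 1 / 2 - ε) := by
  set ε' : ℝ := min ε (1/4) with hε'
  have hε'0 : 0 < ε' := lt_min hε (by norm_num)
  have hε'1 : ε' ≤ 1/4 := min_le_right _ _
  have hε'ε : ε' ≤ ε := min_le_left _ _
  set B : ℝ := (j:ℝ) + 2*(α:ℝ) - 1/2 - ε' with hB
  have hα1 : (1:ℝ) ≤ (α:ℝ) := by exact_mod_cast hα
  have hB1 : 1 ≤ B := by
    have : (0:ℝ) ≤ (j:ℝ) := Nat.cast_nonneg j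
    rw [hB]; linarith
  have hB0 : 0 ≤ B := by linarith
  set s : ℝ := 1 + 2*ε' with hs
  have hs1 : 1 < s := by rw [hs]; linarith
  have hsq : Summable (fun q : ℕ => 1/(q:ℝ)^s) :=
    Real.summable_one_div_nat_rpow.mpr hs1
  have hsp : Summable (fun p : ℤ => 1/(p:ℝ)^2) :=
    Real.summable_one_div_int_pow.mpr one_lt_two
  set T : ℝ := ∑' q : ℕ, 1/(q:ℝ)^s with hT
  set Pp : ℝ := ∑' p : ℤ, 1/(p:ℝ)^2 with hPp
  have hT0 : 0 ≤ T := tsum_nonneg (fun q => by positivity)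
  have hPp0 : 0 ≤ Pp := tsum_nonneg (fun p => by positivity)
  refine ⟨B^B * Pp * T, fun t ht => ?_⟩
  set c : ℝ := B^B / (1+t)^B with hc
  have h1t : (0:ℝ) < 1 + t := by linarith
  have hc0 : 0 ≤ c := by rw [hc]; positivity
  set F : ℤ → ℕ → ℝ := fun p q =>
    if p ≠ 0 ∧ 1 ≤ q then
      (1 / ((p : ℝ) ^ 2 + ((q : ℝ) * (Real.pi / 2)) ^ 2) ^ j)
        * ((p : ℝ) ^ 2 / ((p : ℝ) ^ 2 + ((q : ℝ) * (Real.pi / 2)) ^ 2)) ^ j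
        * (1 / ((p : ℝ) ^ (4 * α)
            * (1 + ((Real.pi * q) / (2 * |(p : ℝ)|)) ^ 2) ^ (2 * α)))
        * Real.exp (-(2 * t * (p : ℝ) ^ 2 / ((p : ℝ) ^ 2 + ((q : ℝ) * (Real.pi / 2)) ^ 2)))
    else 0 with hF
  have hle : ∀ (p : ℤ) (q : ℕ), F p q ≤ c * (1/(p:ℝ)^2) * (1/(q:ℝ)^s) := by
    intro p q
    by_cases h : p ≠ 0 ∧ 1 ≤ q
    · simp only [hF, if_pos h]
      have := termbound j α hα ε' hε'0 hε'1 t ht p h.1 q h.2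
      calc _ ≤ (B^B/(1+t)^B) * (1/(p:ℝ)^2 * (1/(q:ℝ)^s)) := this
        _ = c * (1/(p:ℝ)^2) * (1/(q:ℝ)^s) := by rw [hc]; ring
    · simp only [hF, if_neg h]
      positivity
  have hnn : ∀ (p : ℤ) (q : ℕ), 0 ≤ F p q := by
    intro p q
    by_cases h : p ≠ 0 ∧ 1 ≤ q
    · simp only [hF, if_pos h]
      have h4 : (p:ℝ)^(4*α) = ((p:ℝ)^2)^(2*α) := by rw [← pow_mul]; ring_nf
      rw [h4]
      positivity
    · simp only [hF, if_neg h]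
      exact le_refl 0
  have hdomq : ∀ p : ℤ, Summable (fun q : ℕ => c * (1/(p:ℝ)^2) * (1/(q:ℝ)^s)) :=
    fun p => hsq.mul_left _
  have hFq : ∀ p : ℤ, Summable (fun q : ℕ => F p q) :=
    fun p => Summable.of_nonneg_of_le (hnn p) (hle p) (hdomq p)
  have hinner : ∀ p : ℤ, (∑' q : ℕ, F p q) ≤ c * (1/(p:ℝ)^2) * T := by
    intro p
    calc (∑' q : ℕ, F p q) ≤ ∑' q : ℕ, c * (1/(p:ℝ)^2) * (1/(q:ℝ)^s) :=
          Summable.tsum_le_tsum (hle p) (hFq p) (hdomq p)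
      _ = c * (1/(p:ℝ)^2) * T := by rw [tsum_mul_left, hT]
  have hinner0 : ∀ p : ℤ, 0 ≤ ∑' q : ℕ, F p q := fun p => tsum_nonneg (hnn p)
  have hdomp : Summable (fun p : ℤ => c * (1/(p:ℝ)^2) * T) :=
    (hsp.mul_left c).mul_right T
  have houter : Summable (fun p : ℤ => ∑' q : ℕ, F p q) :=
    Summable.of_nonneg_of_le hinner0 hinner hdomp
  calc (∑' p : ℤ, ∑' q : ℕ, F p q)
      ≤ ∑' p : ℤ, c * (1/(p:ℝ)^2) * T := Summable.tsum_le_tsum hinner houter hdomp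
    _ = (∑' p : ℤ, c * (1/(p:ℝ)^2)) * T := tsum_mul_right
    _ = c * Pp * T := by rw [tsum_mul_left, hPp]
    _ = (B^B * Pp * T) / (1+t)^B := by rw [hc]; ring
    _ ≤ (B^B * Pp * T) / (1+t)^((j:ℝ) + 2*(α:ℝ) - 1/2 - ε) := by
        apply div_le_div_of_nonneg_left (by positivity) (by positivity)
        apply Real.rpow_le_rpow_of_exponent_le (by linarith)
        rw [hB]; linarith
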